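/- Define the weight function w on (0,1] by: w(x) = 1 for x > 59/96 (items of type d and larger); w(x) = 0 for x in (1/2,59/96] (c-items); w(x) = 4/7 for x in (1/3,1/2] (a- and b-items); w(x) = 1/(k+1) for x in (1/(k+2),1/(k+1)] with 2 ≤ k ≤ 18; and w(x) = 20x/19 for x ≤ 1/20. Then for any finite set of items x_1,...,x_t with x_1 + ... + x_t ≤ 1, the total weight w(x_1) + ... + w(x_t) < 1.63. -/

import Mathlib

/-!
Items of size at most `1/3` have weight at most `4/3` times their size (an item in
`(1/(k+1), 1/k]` weighs `1/k ≤ (k+1)/k · x`), and items of size at most `1/19` even at most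
`20/19` times their size. At most two items exceed `1/3`, each weighing at most `4/7` unless it
exceeds `59/96` and weighs `1`. The extremal bin holds a `d`-item, an `a/b`-item and tiny items
of total size `< 5/96`: `1 + 4/7 + 20/19 · 5/96 < 1.63`; every other mix of large items leaves
weight at most `8/7 + 4/9`.
-/

/-- The weight function of Case 1 of the analysis of Refined Harmonic Match:
`w x = 1` for `x > 59/96`, `w x = 0` for `x ∈ (1/2, 59/96]`, `w x = 4/7` for
`x ∈ (1/3, 1/2]`, `w x = 1/(k+1)` for `x ∈ (1/(k+2), 1/(k+1)]` with `2 ≤ k ≤ 18`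
(equivalently `w x = 1/⌊1/x⌋` for `x ∈ (1/20, 1/3]`), and `w x = 20x/19` for
`x ≤ 1/20`. -/
noncomputable def wCase1 (x : ℝ) : ℝ :=
  if 59 / 96 < x then 1
  else if 1 / 2 < x then 0
  else if 1 / 3 < x then 4 / 7
  else if 1 / 20 < x then 1 / (⌊1 / x⌋ : ℝ)
  else 20 * x / 19

lemma one_div_floor_one_div_le {x : ℝ} (hx : 0 < x) {k : ℕ} (hk : 0 < k) (hxk : x ≤ 1 / k) :
    1 / (⌊1 / x⌋ : ℝ) ≤ (k + 1) / k * x := by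
  have hk' : (0 : ℝ) < k := by exact_mod_cast hk
  have hkn : (k : ℝ) ≤ ⌊1 / x⌋ := by
    have : (k : ℤ) ≤ ⌊1 / x⌋ := Int.le_floor.mpr <| by
      push_cast
      rw [le_div_iff₀ hx]
      rwa [le_div_iff₀ hk', mul_comm] at hxk
    exact_mod_cast this
  have hnx : 1 < (⌊1 / x⌋ + 1 : ℝ) * x := by
    have := Int.lt_floor_add_one (1 / x)
    rwa [div_lt_iff₀ hx] at this
  rw [div_le_iff₀ (by linarith), div_mul_eq_mul_div, div_mul_eq_mul_div, le_div_iff₀ hk']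
  have hpos : (0 : ℝ) < (k + 1) * ⌊1 / x⌋ := mul_pos (by linarith) (by linarith)
  nlinarith [mul_lt_mul_of_pos_left hnx hpos]

lemma wCase1_le_of_le_one_third {x : ℝ} (hx : 0 < x) (hx3 : x ≤ 1 / 3) :
    wCase1 x ≤ 4 / 3 * x := by
  have := one_div_floor_one_div_le hx (k := 3) (by norm_num) (by norm_num [hx3])
  unfold wCase1
  split_ifs <;> linarith

lemma wCase1_le_of_le_one_nineteenth {x : ℝ} (hx : 0 < x) (hx19 : x ≤ 1 / 19) :
    wCase1 x ≤ 20 / 19 * x := by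
  have := one_div_floor_one_div_le hx (k := 19) (by norm_num) (by norm_num [hx19])
  unfold wCase1
  split_ifs <;> linarith

lemma wCase1_of_gt {x : ℝ} (hx : 59 / 96 < x) : wCase1 x = 1 := if_pos hx

lemma wCase1_le_four_sevenths {x : ℝ} (hx : 0 < x) (hx59 : x ≤ 59 / 96) : wCase1 x ≤ 4 / 7 := by
  by_cases hx3 : x ≤ 1 / 3
  · linarith [wCase1_le_of_le_one_third hx hx3]
  · unfold wCase1
    split_ifs <;> linarith

lemma sum_map_wCase1_le_of_forall_le {l : List ℝ} {c : ℝ} (hl : ∀ x ∈ l, wCase1 x ≤ c * x) :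
    (l.map wCase1).sum ≤ c * l.sum := by
  calc (l.map wCase1).sum ≤ (l.map (c * ·)).sum := List.sum_le_sum hl
    _ = c * l.sum := by rw [List.sum_map_mul_left, List.map_id']

lemma wCase1_add_lt_of_one_third_lt {a s W : ℝ} (ha : 1 / 3 < a) (has : a + s ≤ 1)
    (hW : W ≤ 4 / 3 * s) : wCase1 a + W < 1.63 := by
  by_cases ha59 : 59 / 96 < a
  · rw [wCase1_of_gt ha59]
    norm_num
    linarith
  · have := wCase1_le_four_sevenths (by linarith) (not_lt.mp ha59)
    norm_num
    linarith

lemma wCase1_add_wCase1_add_lt_of_one_third_lt {a b s W : ℝ} (ha : 1 / 3 < a) (hb : 1 / 3 < b)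
    (hs : 0 ≤ s) (habs : a + b + s ≤ 1) (hW : W ≤ 4 / 3 * s)
    (hW' : s ≤ 1 / 19 → W ≤ 20 / 19 * s) :
    wCase1 a + wCase1 b + W < 1.63 := by
  wlog hba : b ≤ a generalizing a b
  · rw [add_comm (wCase1 a)]
    exact this hb ha (by linarith) (by linarith)
  have hwb := wCase1_le_four_sevenths (by linarith) (by linarith : b ≤ 59 / 96)
  by_cases ha59 : 59 / 96 < a
  · -- a `d`-item and an `a/b`-item leave room `< 5/96 < 1/19`, where the `20/19` ratio applies
    rw [wCase1_of_gt ha59]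
    have := hW' (by linarith)
    norm_num
    linarith
  · have := wCase1_le_four_sevenths (by linarith) (not_lt.mp ha59)
    norm_num
    linarith

lemma sum_map_wCase1_add_lt {B : List ℝ} {s W : ℝ} (hB : ∀ x ∈ B, 1 / 3 < x) (hs : 0 ≤ s)
    (hBs : B.sum + s ≤ 1) (hW : W ≤ 4 / 3 * s) (hW' : s ≤ 1 / 19 → W ≤ 20 / 19 * s) :
    (B.map wCase1).sum + W < 1.63 := by
  match B, hB, hBs with
  | [], _, hBs =>
    rw [List.sum_nil, zero_add] at hBs
    norm_num
    linarith
  | [a], hB, hBs =>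
    simp only [List.map_cons, List.map_nil, List.sum_cons, List.sum_nil, add_zero] at hBs ⊢
    exact wCase1_add_lt_of_one_third_lt (hB a (by simp)) hBs hW
  | [a, b], hB, hBs =>
    simp only [List.map_cons, List.map_nil, List.sum_cons, List.sum_nil, add_zero] at hBs ⊢
    exact wCase1_add_wCase1_add_lt_of_one_third_lt (hB a (by simp)) (hB b (by simp)) hs
      (by linarith) hW hW'
  | a :: b :: c :: t, hB, hBs =>
    have ht : 0 ≤ t.sum := List.sum_nonneg fun x hx => by linarith [hB x (by simp [hx])]
    simp only [List.sum_cons] at hBs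
    linarith [hB a (by simp), hB b (by simp), hB c (by simp)]

/-- Any set of items from (0,1] that fits in a single bin has total Case-1 weight
less than 1.63. -/
theorem case1_weight_bound (l : List ℝ)
    (h : ∀ x ∈ l, 0 < x ∧ x ≤ 1) (hsum : l.sum ≤ 1) :
    (l.map wCase1).sum < 1.63 := by
  set B := l.filter (1 / 3 < ·)
  set S := l.filter (¬ 1 / 3 < ·)
  have hB : ∀ x ∈ B, 1 / 3 < x := fun x hx => by simpa using (List.mem_filter.mp hx).2
  have hS : ∀ x ∈ S, 0 < x ∧ x ≤ 1 / 3 := fun x hx => by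
    obtain ⟨hxl, hx⟩ := List.mem_filter.mp hx
    exact ⟨(h x hxl).1, by simpa using hx⟩
  have hS0 : 0 ≤ S.sum := List.sum_nonneg fun x hx => (hS x hx).1.le
  have hBS : B.sum + S.sum = l.sum := by
    simpa only [List.map_id] using List.sum_map_filter_add_sum_map_filter_not (1 / 3 < ·) id l
  rw [← List.sum_map_filter_add_sum_map_filter_not (1 / 3 < ·)]
  refine sum_map_wCase1_add_lt hB hS0 (by linarith) ?_ fun hS19 => ?_
  · exact sum_map_wCase1_le_of_forall_le fun x hx =>
      wCase1_le_of_le_one_third (hS x hx).1 (hS x hx).2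
  · exact sum_map_wCase1_le_of_forall_le fun x hx =>
      wCase1_le_of_le_one_nineteenth (hS x hx).1
        ((List.single_le_sum (fun y hy => (hS y hy).1.le) x hx).trans hS19)
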